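/- arXiv:1704.02945 — 3 statements merged into one kernel-verified Lean document; each statement's English description precedes it below -/
import Mathlib

section
/- Let H be a Hermitian n×n complex matrix and B its nonbacktracking matrix, defined on index pairs e=(i,j), f=(k,l) in [n]² by B_{ef} = H_{kl}·1{j=k}·1{i≠l}. Suppose λ ∈ ℂ satisfies λ² ≠ H_{ij}H_{ji} for all i,j. Define H(λ)_{ij} = λH_{ij}/(λ² − H_{ij}H_{ji}) and the diagonal matrix M(λ) with entries m_i(λ) = 1 + Σ_k H_{ik}H_{ki}/(λ² − H_{ik}H_{ki}). Then λ is an eigenvalue of B if and only if det(M(λ) − H(λ)) = 0. -/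
open Matrix

theorem stmt1 (n : ℕ) (H : Matrix (Fin n) (Fin n) ℂ) (hH : H.IsHermitian)
    (B : Matrix (Fin n × Fin n) (Fin n × Fin n) ℂ)
    (hB : ∀ i j k l : Fin n, B (i, j) (k, l) = if j = k ∧ i ≠ l then H k l else 0)
    (lam : ℂ) (hlam : ∀ i j : Fin n, lam ^ 2 ≠ H i j * H j i) :
    lam ∈ spectrum ℂ B ↔
      Matrix.det
        (Matrix.diagonal (fun i => 1 + ∑ k, H i k * H k i / (lam ^ 2 - H i k * H k i)) -
          Matrix.of fun i j => lam * H i j / (lam ^ 2 - H i j * H j i)) = 0 := by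
  classical
  have hΔ : ∀ i j, lam ^ 2 - H i j * H j i ≠ 0 := fun i j => sub_ne_zero_of_ne (hlam i j)
  set N : Matrix (Fin n) (Fin n) ℂ :=
    Matrix.diagonal (fun i => 1 + ∑ k, H i k * H k i / (lam ^ 2 - H i k * H k i)) -
      Matrix.of fun i j => lam * H i j / (lam ^ 2 - H i j * H j i) with hNdef
  -- row formula for (lam • 1 - B) *ᵥ f
  have hrow : ∀ (f : Fin n × Fin n → ℂ) (i j : Fin n),
      ((lam • (1 : Matrix (Fin n × Fin n) (Fin n × Fin n) ℂ) - B) *ᵥ f) (i, j)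
        = lam * f (i, j) - ((∑ l, H j l * f (j, l)) - H j i * f (j, i)) := by
    intro f i j
    have hone : ∑ p : Fin n × Fin n,
        (lam • (1 : Matrix (Fin n × Fin n) (Fin n × Fin n) ℂ)) (i, j) p * f p
          = lam * f (i, j) := by
      simp [Matrix.smul_apply, Matrix.one_apply, ite_mul, smul_eq_mul, mul_ite,
        Finset.sum_ite_eq, mul_assoc]
    have hBsum : ∑ p : Fin n × Fin n, B (i, j) p * f p
        = (∑ l, H j l * f (j, l)) - H j i * f (j, i) := by
      rw [Fintype.sum_prod_type]
      calc (∑ k, ∑ l, B (i, j) (k, l) * f (k, l))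
          = ∑ l, B (i, j) (j, l) * f (j, l) :=
            Finset.sum_eq_single_of_mem j (Finset.mem_univ j)
              (fun k _ hk => Finset.sum_eq_zero fun l _ => by
                rw [hB, if_neg (fun h => hk h.1.symm), zero_mul])
        _ = ∑ l, (H j l * f (j, l) - if i = l then H j l * f (j, l) else 0) := by
            refine Finset.sum_congr rfl fun l _ => ?_
            rw [hB]
            by_cases h : i = l <;> simp [h]
        _ = (∑ l, H j l * f (j, l)) - H j i * f (j, i) := by
            rw [Finset.sum_sub_distrib, Finset.sum_ite_eq]
            simp
    simp only [Matrix.mulVec, dotProduct, Matrix.sub_apply, sub_mul,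
      Finset.sum_sub_distrib]
    rw [hone, hBsum]
  -- row formula for N *ᵥ g
  have hNrow : ∀ (g : Fin n → ℂ) (j : Fin n), (N *ᵥ g) j
      = g j - ∑ l, (lam * H j l * g l - H j l * H l j * g j) / (lam ^ 2 - H j l * H l j) := by
    intro g j
    rw [hNdef, Matrix.sub_mulVec]
    simp only [Pi.sub_apply, Matrix.mulVec_diagonal]
    have hof : ((Matrix.of fun i j => lam * H i j / (lam ^ 2 - H i j * H j i)) *ᵥ g) j
        = ∑ l, lam * H j l / (lam ^ 2 - H j l * H l j) * g l := by
      simp [Matrix.mulVec, dotProduct]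
    rw [hof]
    have key : (∑ k, H j k * H k j / (lam ^ 2 - H j k * H k j)) * g j
        - ∑ l, lam * H j l / (lam ^ 2 - H j l * H l j) * g l
        = - ∑ l, (lam * H j l * g l - H j l * H l j * g j) / (lam ^ 2 - H j l * H l j) := by
      rw [Finset.sum_mul, ← Finset.sum_sub_distrib, ← Finset.sum_neg_distrib]
      exact Finset.sum_congr rfl fun l _ => by ring
    linear_combination key
  have hspec : lam ∈ spectrum ℂ B ↔
      ∃ f, f ≠ 0 ∧ (lam • (1 : Matrix (Fin n × Fin n) (Fin n × Fin n) ℂ) - B) *ᵥ f = 0 := by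
    rw [spectrum.mem_iff, Matrix.isUnit_iff_isUnit_det, isUnit_iff_ne_zero, not_ne_iff,
      ← Matrix.exists_mulVec_eq_zero_iff, Algebra.algebraMap_eq_smul_one]
  have hdet : N.det = 0 ↔ ∃ g, g ≠ 0 ∧ N *ᵥ g = 0 := Matrix.exists_mulVec_eq_zero_iff.symm
  rw [hspec, hdet]
  constructor
  · rintro ⟨f, hf0, hf⟩
    set g : Fin n → ℂ := fun j => ∑ l, H j l * f (j, l) with hg
    have hstar : ∀ i j, lam * f (i, j) + H j i * f (j, i) = g j := by
      intro i j
      have h := congrFun hf (i, j)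
      rw [hrow] at h
      simp only [Pi.zero_apply] at h
      simp only [hg]
      linear_combination h
    have hff : ∀ i j, f (i, j) = (lam * g j - H j i * g i) / (lam ^ 2 - H i j * H j i) := by
      intro i j
      rw [eq_div_iff (hΔ i j)]
      linear_combination lam * hstar i j - H j i * hstar j i
    refine ⟨g, ?_, ?_⟩
    · intro hg0
      apply hf0
      funext p
      have h := hff p.1 p.2
      rw [hg0] at h
      simpa using h
    · funext j
      simp only [Pi.zero_apply]
      rw [hNrow]
      have hte : ∀ l, (lam * H j l * g l - H j l * H l j * g j) / (lam ^ 2 - H j l * H l j)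
          = H j l * f (j, l) := by
        intro l
        rw [hff j l, ← mul_div_assoc]
        congr 1
        ring
      rw [Finset.sum_congr rfl fun l _ => hte l]
      simp only [hg]
      ring
  · rintro ⟨g, hg0, hg⟩
    refine ⟨fun p => (lam * g p.2 - H p.2 p.1 * g p.1) / (lam ^ 2 - H p.1 p.2 * H p.2 p.1),
      ?_, ?_⟩
    · intro hf0
      obtain ⟨j, hj⟩ : ∃ j, g j ≠ 0 := by
        by_contra h
        push_neg at h
        exact hg0 (funext h)
      have h1 := congrFun hf0 (j, j)
      simp only [Pi.zero_apply] at h1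
      rw [div_eq_zero_iff] at h1
      rcases h1 with h1 | h1
      · have hlj : lam = H j j := mul_right_cancel₀ hj (sub_eq_zero.mp h1)
        exact hlam j j (by rw [hlj]; ring)
      · exact hΔ j j h1
    · have key : ∀ j, ∑ l, H j l *
          ((lam * g l - H l j * g j) / (lam ^ 2 - H j l * H l j)) = g j := by
        intro j
        have h := congrFun hg j
        rw [hNrow] at h
        simp only [Pi.zero_apply] at h
        have hte : ∀ l, H j l * ((lam * g l - H l j * g j) / (lam ^ 2 - H j l * H l j))
            = (lam * H j l * g l - H j l * H l j * g j) / (lam ^ 2 - H j l * H l j) := by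
          intro l
          rw [← mul_div_assoc]
          congr 1
          ring
        rw [Finset.sum_congr rfl fun l _ => hte l]
        linear_combination -h
      funext p
      obtain ⟨i, j⟩ := p
      simp only [Pi.zero_apply]
      rw [hrow]
      simp only []
      rw [key j]
      have d1 := hΔ i j
      have d2 := hΔ j i
      field_simp
      ring
end

section
/- Let H be an n×n complex matrix with nonbacktracking matrix B, and let λ be an eigenvalue of B with eigenvector x ∈ ℂ^{n²}, with λ² ≠ H_{ij}H_{ji} for all i,j. Define y ∈ ℂⁿ by y_i = Σ_k H_{ik} x_{(i,k)}. Then y ≠ 0, and for all i,j: x_{(j,i)} = (λ y_i − H_{ij} y_j)/(λ² − H_{ij}H_{ji}). -/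
theorem keylem (n : ℕ) (H : Matrix (Fin n) (Fin n) ℂ)
    (B : Matrix (Fin n × Fin n) (Fin n × Fin n) ℂ)
    (hB : ∀ i j k l : Fin n, B (i, j) (k, l) = if j = k ∧ i ≠ l then H k l else 0)
    (lam : ℂ)
    (x : Fin n × Fin n → ℂ) (heig : B.mulVec x = lam • x)
    (y : Fin n → ℂ) (hy : ∀ i : Fin n, y i = ∑ k, H i k * x (i, k)) :
    ∀ i j : Fin n, lam * x (j, i) = y i - H i j * x (i, j) := by
  intro i j
  have h1 := congrFun heig (j, i)
  simp only [Matrix.mulVec, dotProduct, Fintype.sum_prod_type, Pi.smul_apply,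
    smul_eq_mul] at h1
  rw [← h1]
  rw [show (∑ k, ∑ l, B (j,i) (k,l) * x (k,l)) = ∑ k, ∑ l, (if i = k ∧ j ≠ l then H k l else 0) * x (k,l) by
    apply Finset.sum_congr rfl; intro k _; apply Finset.sum_congr rfl; intro l _; rw [hB]]
  rw [Finset.sum_eq_single i]
  · have h2 : ∀ l, (if i = i ∧ j ≠ l then H i l else 0) * x (i,l)
        = H i l * x (i,l) - if l = j then H i j * x (i,j) else 0 := by
      intro l
      rcases eq_or_ne l j with h|h
      · simp [h]
      · simp [h, Ne.symm h]
    rw [Finset.sum_congr rfl (fun l _ => h2 l), Finset.sum_sub_distrib,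
      Finset.sum_ite_eq' Finset.univ j, hy]
    simp
  · intro k _ hk
    simp [Ne.symm hk]
  · simp

theorem stmt2 (n : ℕ) (H : Matrix (Fin n) (Fin n) ℂ)
    (B : Matrix (Fin n × Fin n) (Fin n × Fin n) ℂ)
    (hB : ∀ i j k l : Fin n, B (i, j) (k, l) = if j = k ∧ i ≠ l then H k l else 0)
    (lam : ℂ) (hlam : ∀ i j : Fin n, lam ^ 2 ≠ H i j * H j i)
    (x : Fin n × Fin n → ℂ) (hx : x ≠ 0) (heig : B.mulVec x = lam • x)
    (y : Fin n → ℂ) (hy : ∀ i : Fin n, y i = ∑ k, H i k * x (i, k)) :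
    y ≠ 0 ∧ ∀ i j : Fin n,
      x (j, i) = (lam * y i - H i j * y j) / (lam ^ 2 - H i j * H j i) := by
  have key := keylem n H B hB lam x heig y hy
  have main : ∀ i j : Fin n,
      x (j, i) * (lam ^ 2 - H i j * H j i) = lam * y i - H i j * y j := by
    intro i j
    have h1 := key i j
    have h2 := key j i
    linear_combination lam * h1 - H i j * h2
  have hden : ∀ i j : Fin n, lam ^ 2 - H i j * H j i ≠ 0 :=
    fun i j => sub_ne_zero.mpr (hlam i j)
  constructor
  · intro hy0
    apply hx
    funext p
    obtain ⟨j, i⟩ := p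
    have := main i j
    rw [hy0] at this
    simp only [Pi.zero_apply, mul_zero, sub_zero] at this
    have := mul_eq_zero.mp this
    simpa [hden i j] using this
  · intro i j
    rw [eq_div_iff (hden i j)]
    exact main i j
end

section
/- Let d = γ√(log n / log log n) with n ≥ 3 and d > 0. Then there is a universal constant C₁ such that max{d^{−1}, d^{−2}·(log n)/(1 ∨ log((log n)/d))} ≤ C₁·max{γ^{−1}, γ^{−2}}. -/
theorem stmt17 :
    ∃ C₁ : ℝ, 0 < C₁ ∧ ∀ (n : ℕ) (d γ : ℝ), 3 ≤ n → 0 < d → 0 < γ →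
      d = γ * Real.sqrt (Real.log n / Real.log (Real.log n)) →
      max d⁻¹ (d⁻¹ ^ 2 * Real.log n / max 1 (Real.log (Real.log n / d))) ≤
        C₁ * max γ⁻¹ (γ⁻¹ ^ 2) := by
  refine ⟨8, by norm_num, ?_⟩
  intro n d γ hn hd hγ hdef
  set L := Real.log n with hLdef
  set LL := Real.log L with hLLdef
  have hL1 : 1 < L := by
    have h3 : (3:ℝ) ≤ n := by exact_mod_cast hn
    have he : Real.exp 1 < 3 := by
      have := Real.exp_one_lt_d9; linarith
    have : 1 < Real.log 3 := (Real.lt_log_iff_exp_lt (by norm_num)).2 he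
    have hlog : Real.log 3 ≤ L := Real.log_le_log (by norm_num) h3
    linarith
  have hL0 : 0 < L := by linarith
  have hLL0 : 0 < LL := Real.log_pos hL1
  have hLLleL : LL ≤ L := (Real.log_le_self hL0.le)
  set s := Real.sqrt (L / LL) with hsdef
  have hratio1 : 1 ≤ L / LL := (one_le_div hLL0).2 hLLleL
  have hs1 : 1 ≤ s := by
    rw [hsdef, show (1:ℝ) = Real.sqrt 1 by simp]
    exact Real.sqrt_le_sqrt hratio1
  have hs0 : 0 < s := by linarith
  have hMpos : 0 < max γ⁻¹ (γ⁻¹ ^ 2) := lt_max_of_lt_left (by positivity)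
  -- first term
  have hterm1 : d⁻¹ ≤ γ⁻¹ := by
    rw [hdef, mul_inv]
    calc γ⁻¹ * s⁻¹ ≤ γ⁻¹ * 1 := by
          apply mul_le_mul_of_nonneg_left _ (by positivity)
          exact inv_le_one_of_one_le₀ hs1
      _ = γ⁻¹ := by ring
  -- second term rewrite
  have hssq : s ^ 2 = L / LL := Real.sq_sqrt (by positivity)
  have hnum : d⁻¹ ^ 2 * L = γ⁻¹ ^ 2 * LL := by
    rw [hdef]
    field_simp
    rw [hssq]
    field_simp
  set D := max 1 (Real.log (L / d)) with hDdef
  have hD1 : (1:ℝ) ≤ D := le_max_left _ _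
  have hD0 : 0 < D := by linarith
  -- log(L/d) = LL/2 + log LL / 2 - log γ
  have hlogd : Real.log (L / d) = LL / 2 + Real.log LL / 2 - Real.log γ := by
    rw [Real.log_div hL0.ne' hd.ne', hdef, Real.log_mul hγ.ne' hs0.ne',
        hsdef, Real.log_sqrt (by positivity), Real.log_div hL0.ne' hLL0.ne']
    ring
  -- key: LL / D ≤ 8 * max 1 γ
  have hkey : LL / D ≤ 8 * max 1 γ := by
    have hmax1 : (1:ℝ) ≤ max 1 γ := le_max_left _ _
    rcases le_or_gt LL 8 with h8 | h8
    · calc LL / D ≤ LL / 1 := by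
            exact div_le_div_of_nonneg_left hLL0.le one_pos hD1
        _ = LL := by ring
        _ ≤ 8 * max 1 γ := by nlinarith
    · rcases le_or_gt (Real.log γ) (LL / 4) with hg | hg
      · -- log(L/d) ≥ LL/4
        have hlogLL : 0 < Real.log LL := Real.log_pos (by linarith)
        have hDge : LL / 4 ≤ D := by
          rw [hDdef, hlogd]
          refine le_max_of_le_right ?_
          linarith
        calc LL / D ≤ LL / (LL / 4) := by
              exact div_le_div_of_nonneg_left hLL0.le (by linarith) hDge
          _ = 4 := by field_simp
          _ ≤ 8 * max 1 γ := by nlinarith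
      · -- γ large: γ ≥ exp(LL/4) ≥ LL/4
        have hγge : LL / 4 ≤ γ := by
          have h1 : Real.exp (LL / 4) ≤ γ := by
            rw [← Real.exp_log hγ]
            exact Real.exp_le_exp.2 hg.le
          have h2 : LL / 4 + 1 ≤ Real.exp (LL / 4) := Real.add_one_le_exp _
          linarith
        calc LL / D ≤ LL / 1 := by
              exact div_le_div_of_nonneg_left hLL0.le one_pos hD1
          _ = LL := by ring
          _ ≤ 8 * γ := by linarith
          _ ≤ 8 * max 1 γ := by
              have := le_max_right (1:ℝ) γ; linarith
  have hterm2 : d⁻¹ ^ 2 * L / D ≤ 8 * max γ⁻¹ (γ⁻¹ ^ 2) := by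
    rw [hnum]
    have : γ⁻¹ ^ 2 * LL / D = γ⁻¹ ^ 2 * (LL / D) := by ring
    rw [this]
    calc γ⁻¹ ^ 2 * (LL / D) ≤ γ⁻¹ ^ 2 * (8 * max 1 γ) := by
          apply mul_le_mul_of_nonneg_left hkey (by positivity)
      _ = 8 * (γ⁻¹ ^ 2 * max 1 γ) := by ring
      _ = 8 * max γ⁻¹ (γ⁻¹ ^ 2) := by
          rw [mul_max_of_nonneg _ _ (by positivity : (0:ℝ) ≤ γ⁻¹ ^ 2), mul_one]
          have h2 : γ⁻¹ ^ 2 * γ = γ⁻¹ := by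
            rw [sq, mul_assoc, inv_mul_cancel₀ hγ.ne', mul_one]
          rw [h2, max_comm]
  apply max_le
  · calc d⁻¹ ≤ γ⁻¹ := hterm1
      _ ≤ max γ⁻¹ (γ⁻¹ ^ 2) := le_max_left _ _
      _ ≤ 8 * max γ⁻¹ (γ⁻¹ ^ 2) := by linarith
  · exact hterm2
end
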